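/- Let E be an n-dimensional evolution algebra whose structure matrix A is strictly upper triangular (a_{ij} = 0 for j ≤ i). Then E^{2^{n-1}+1} = 0; i.e., E is nilpotent with nilpotency index at most 2^{n-1}+1. -/

import Mathlib

/- Grade `Fin n → ℂ` by the first nonzero coordinate: let `V m` be the vectors vanishing on the
coordinates `< m`. Since `A` is strictly upper triangular, `eMul A` maps `V a × V b` into
`V (max a b + 1)`. As `Eᵏ` is a sum of products `Eⁱ E^{k-i}`, induction gives `Eᵏ ⊆ V ⌈log₂ k⌉`,
and `⌈log₂ (2ⁿ⁻¹ + 1)⌉ = n` while `V n = 0`. -/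

/-- Evolution algebra multiplication on `Fin n → ℂ` determined by a structure
matrix `A`: basis vectors satisfy `eᵢ · eⱼ = 0` for `i ≠ j` and
`eᵢ · eᵢ = ∑ k, A i k • e k`. -/
noncomputable def eMul {n : ℕ} (A : Matrix (Fin n) (Fin n) ℂ) (x y : Fin n → ℂ) : Fin n → ℂ :=
  fun k => ∑ p, x p * y p * A p k

/-- Product of two subspaces: the span of all products. -/
noncomputable def sMul {n : ℕ} (A : Matrix (Fin n) (Fin n) ℂ) (S T : Submodule ℂ (Fin n → ℂ)) :
    Submodule ℂ (Fin n → ℂ) :=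
  Submodule.span ℂ {z | ∃ x ∈ S, ∃ y ∈ T, z = eMul A x y}

/-- `dPow A k = E⁽ᵏ⁾`: `E⁽¹⁾ = E`, `E⁽ᵏ⁺¹⁾ = E⁽ᵏ⁾E⁽ᵏ⁾` (index 0 is a dummy). -/
noncomputable def dPow {n : ℕ} (A : Matrix (Fin n) (Fin n) ℂ) : ℕ → Submodule ℂ (Fin n → ℂ)
  | 0 => ⊤
  | 1 => ⊤
  | (k+2) => sMul A (dPow A (k+1)) (dPow A (k+1))

/-- `rPow A k = E^{<k>}`: `E^{<1>} = E`, `E^{<k+1>} = E^{<k>}·E` (index 0 dummy). -/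
noncomputable def rPow {n : ℕ} (A : Matrix (Fin n) (Fin n) ℂ) : ℕ → Submodule ℂ (Fin n → ℂ)
  | 0 => ⊤
  | 1 => ⊤
  | (k+2) => sMul A (rPow A (k+1)) ⊤

/-- `pPow A k = Eᵏ`: `E¹ = E`, `Eᵏ = ∑_{i=1}^{k-1} Eⁱ·E^{k-i}` (index 0 dummy). -/
noncomputable def pPow {n : ℕ} (A : Matrix (Fin n) (Fin n) ℂ) : ℕ → Submodule ℂ (Fin n → ℂ)
  | 0 => ⊤
  | 1 => ⊤
  | (k+2) => ⨆ i : Fin (k+1), sMul A (pPow A (i.1+1)) (pPow A (k+1-i.1))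
termination_by k => k
decreasing_by all_goals (have := i.isLt; omega)

theorem Nat.clog_add_le_max_succ (b x y : ℕ) :
    Nat.clog b (x + y) ≤ max (Nat.clog b x) (Nat.clog b y) + 1 := by
  rcases le_or_gt b 1 with hb | hb
  · simp [Nat.clog_of_left_le_one hb]
  refine Nat.clog_le_of_le_pow ?_
  have hx : x ≤ b ^ max (Nat.clog b x) (Nat.clog b y) :=
    (Nat.le_pow_clog hb x).trans (Nat.pow_le_pow_right (by omega) (le_max_left _ _))
  have hy : y ≤ b ^ max (Nat.clog b x) (Nat.clog b y) :=
    (Nat.le_pow_clog hb y).trans (Nat.pow_le_pow_right (by omega) (le_max_right _ _))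
  rw [pow_succ]
  nlinarith

section VanishBelow

variable (R : Type*) [Semiring R] (n : ℕ)

def vanishBelow (m : ℕ) : Submodule R (Fin n → R) where
  carrier := {x | ∀ k : Fin n, (k : ℕ) < m → x k = 0}
  add_mem' hx hy k hk := by simp [hx k hk, hy k hk]
  zero_mem' _ _ := rfl
  smul_mem' _ _ hx k hk := by simp [hx k hk]

variable {R n}

theorem vanishBelow_antitone : Antitone (vanishBelow R n) :=
  fun _ _ hab _ hx k hk => hx k (hk.trans_le hab)

@[simp]
theorem vanishBelow_zero : vanishBelow R n 0 = ⊤ :=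
  eq_top_iff.mpr fun _ _ _ hk => absurd hk (Nat.not_lt_zero _)

theorem vanishBelow_eq_bot {m : ℕ} (hm : n ≤ m) : vanishBelow R n m = ⊥ :=
  eq_bot_iff.mpr fun _ hx => (Submodule.mem_bot R).mpr <| funext fun k => hx k (k.isLt.trans_le hm)

end VanishBelow

section StrictlyUpperTriangular

variable {n : ℕ} {A : Matrix (Fin n) (Fin n) ℂ} (hA : ∀ i j : Fin n, (j : ℕ) ≤ (i : ℕ) → A i j = 0)
include hA

theorem eMul_mem_vanishBelow {a b : ℕ} {x y : Fin n → ℂ} (hx : x ∈ vanishBelow ℂ n a)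
    (hy : y ∈ vanishBelow ℂ n b) : eMul A x y ∈ vanishBelow ℂ n (max a b + 1) := by
  intro k hk
  refine Finset.sum_eq_zero fun p _ => ?_
  by_cases hpa : (p : ℕ) < a
  · simp [hx p hpa]
  by_cases hpb : (p : ℕ) < b
  · simp [hy p hpb]
  · simp [hA p k (by omega)]

theorem sMul_le_vanishBelow {a b : ℕ} {S T : Submodule ℂ (Fin n → ℂ)}
    (hS : S ≤ vanishBelow ℂ n a) (hT : T ≤ vanishBelow ℂ n b) :
    sMul A S T ≤ vanishBelow ℂ n (max a b + 1) := by
  rw [sMul, Submodule.span_le]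
  rintro _ ⟨x, hx, y, hy, rfl⟩
  exact eMul_mem_vanishBelow hA (hS hx) (hT hy)

theorem pPow_le_vanishBelow_clog (k : ℕ) : pPow A k ≤ vanishBelow ℂ n (Nat.clog 2 k) := by
  induction k using Nat.strong_induction_on with
  | _ k ih =>
    match k with
    | 0 | 1 => simp [pPow]
    | k + 2 =>
      rw [pPow]
      refine iSup_le fun i => ?_
      have hi := i.isLt
      have hsplit : k + 2 = (i.1 + 1) + (k + 1 - i.1) := by omega
      refine (sMul_le_vanishBelow hA (ih _ (by omega)) (ih _ (by omega))).trans
        (vanishBelow_antitone ?_)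
      rw [hsplit]
      exact Nat.clog_add_le_max_succ 2 _ _

end StrictlyUpperTriangular

/-- an evolution algebra whose structure matrix is strictly upper
triangular is nilpotent with nilpotency index at most `2ⁿ⁻¹ + 1`. -/
theorem strictly_upper_triangular_nilpotent {n : ℕ}
    (A : Matrix (Fin n) (Fin n) ℂ)
    (hA : ∀ i j : Fin n, (j : ℕ) ≤ (i : ℕ) → A i j = 0) :
    pPow A (2 ^ (n - 1) + 1) = ⊥ := by
  have hclog : n ≤ Nat.clog 2 (2 ^ (n - 1) + 1) := by
    have : n - 1 < Nat.clog 2 (2 ^ (n - 1) + 1) :=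
      (Nat.lt_clog_iff_pow_lt one_lt_two).mpr (Nat.lt_succ_self _)
    omega
  exact eq_bot_iff.mpr <|
    (pPow_le_vanishBelow_clog hA _).trans (vanishBelow_eq_bot hclog).le
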